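/- Let T and T' be triangles in ℝ² (convex hulls of affinely independent triples of points), and for δ ∈ ℝ let M_δ : ℝ² → ℝ² be the shear M_δ(x, y) = (x + δy, y). Then the set { δ ∈ ℝ : M_δ(T) is congruent to T' } is finite (its cardinality is at most six). -/

import Mathlib

open MeasureTheory

noncomputable section

/-- The Euclidean plane. -/
abbrev Plane : Type := EuclideanSpace ℝ (Fin 2)

/-- A triangle is the convex hull of three affinely independent points. -/
def IsTriangle (T : Set Plane) : Prop :=
  ∃ p q r : Plane, AffineIndependent ℝ ![p, q, r] ∧ T = convexHull ℝ {p, q, r}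

/-- Two subsets of the plane are congruent if one is the image of the other under
an isometry of the plane (reflections allowed). -/
def PlaneCongruent (A B : Set Plane) : Prop :=
  ∃ f : Plane ≃ᵢ Plane, f '' A = B

/-- A tiling of `A ⊆ ℝ²`: a countable collection of compact sets whose interiors are
pairwise disjoint and whose union is `A`. -/
def IsTilingOf (𝒯 : Set (Set Plane)) (A : Set Plane) : Prop :=
  𝒯.Countable ∧ (∀ T ∈ 𝒯, IsCompact T) ∧
    (∀ T ∈ 𝒯, ∀ T' ∈ 𝒯, T ≠ T' → interior T ∩ interior T' = ∅) ∧
    ⋃₀ 𝒯 = A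

/-- A vertex of a (convex polygonal) tile is an extreme point of it. -/
def IsVertexOf (p : Plane) (T : Set Plane) : Prop := p ∈ Set.extremePoints ℝ T

/-- An edge of a convex polygon: a nondegenerate segment between two vertices that
lies in the frontier of the polygon. -/
def IsEdgeOf (e : Set Plane) (T : Set Plane) : Prop :=
  ∃ u v : Plane, u ≠ v ∧ IsVertexOf u T ∧ IsVertexOf v T ∧
    e = segment ℝ u v ∧ e ⊆ frontier T

/-- A tiling by convex polygons is vertex-to-vertex if the intersection of any two
distinct tiles is empty, a common vertex, or a common entire edge. -/
def IsVertexToVertex (𝒯 : Set (Set Plane)) : Prop :=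
  ∀ T ∈ 𝒯, ∀ T' ∈ 𝒯, T ≠ T' →
    T ∩ T' = ∅ ∨
    (∃ p : Plane, T ∩ T' = {p} ∧ IsVertexOf p T ∧ IsVertexOf p T') ∨
    (IsEdgeOf (T ∩ T') T ∧ IsEdgeOf (T ∩ T') T')

/-- A convex polygon with exactly `n` vertices: a compact convex set whose set of
extreme points is finite with exactly `n` elements. -/
def IsConvexPolygon (n : ℕ) (T : Set Plane) : Prop :=
  IsCompact T ∧ Convex ℝ T ∧ (Set.extremePoints ℝ T).Finite ∧
    (Set.extremePoints ℝ T).ncard = n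

/-- `A ≃ B`: `B` is the image of `A` under `z ↦ s·z + t` with `s ∈ {1, -1}`. -/
def TransCong (A B : Set Plane) : Prop :=
  ∃ s : ℝ, (s = 1 ∨ s = -1) ∧ ∃ t : Plane, B = (fun z => s • z + t) '' A

/-- The shear map `M_δ (x, y) = (x + δy, y)`. -/
def shear (δ : ℝ) (p : Plane) : Plane :=
  (WithLp.equiv 2 (Fin 2 → ℝ)).symm ![p 0 + δ * p 1, p 1]


/-!
An isometry composed with the shear `M_δ` is an affine bijection, so when `M_δ(T) ≅ T'` it carries
the vertices (extreme points) of `M_δ(T)` onto those of `T'`, and the sums of squared side lengths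
agree. For the sheared triangle that sum is a quadratic polynomial in `δ` whose leading coefficient
`∑ (yᵢ - yⱼ)²` is nonzero, since a triangle does not lie on a horizontal line. Hence at most two
values of `δ` qualify.
-/

open Polynomial in
theorem encard_setOf_quadratic_eq_zero_le_two {R : Type*} [CommRing R] [IsDomain R] {a b c : R}
    (ha : a ≠ 0) : {x : R | a * x ^ 2 + b * x + c = 0}.encard ≤ 2 := by
  classical
  set P : R[X] := C a * X ^ 2 + C b * X + C c
  have hP : P ≠ 0 := ne_zero_of_natDegree_gt (n := 1) (by rw [natDegree_quadratic ha]; norm_num)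
  calc {x : R | a * x ^ 2 + b * x + c = 0}.encard
      ≤ (P.roots.toFinset : Set R).encard :=
        Set.encard_mono fun x hx => by simpa [mem_roots hP, P] using hx
    _ = P.roots.toFinset.card := Set.encard_coe_eq_coe_finsetCard _
    _ ≤ P.natDegree := by exact_mod_cast P.roots.toFinset_card_le.trans (card_roots' P)
    _ = 2 := by rw [natDegree_quadratic ha]; rfl

section ExtremePoints

variable {𝕜 E F : Type*} [Field 𝕜] [LinearOrder 𝕜]
  [AddCommGroup E] [Module 𝕜 E] [AddCommGroup F] [Module 𝕜 F]

theorem notMem_convexHull_pair_of_not_collinear {p q r : E}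
    (h : ¬Collinear 𝕜 ({p, q, r} : Set E)) : p ∉ convexHull 𝕜 {q, r} :=
  fun hp => h (collinear_insert_of_mem_affineSpan_pair (convexHull_subset_affineSpan _ hp))

variable [IsStrictOrderedRing 𝕜]

theorem AffineEquiv.image_extremePoints (f : E ≃ᵃ[𝕜] F) (s : Set E) :
    f '' s.extremePoints 𝕜 = (f '' s).extremePoints 𝕜 := by
  ext b
  obtain ⟨a, rfl⟩ := f.surjective b
  have : ∀ x y, f '' openSegment 𝕜 x y = openSegment 𝕜 (f x) (f y) :=
    image_openSegment _ f.toAffineMap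
  simp only [mem_extremePoints, f.surjective.forall, f.injective.mem_set_image,
    f.injective.eq_iff, ← this]

theorem mem_extremePoints_convexHull_insert {x : E} {t : Set E} (hx : x ∉ convexHull 𝕜 t) :
    x ∈ (convexHull 𝕜 (insert x t)).extremePoints 𝕜 := by
  rcases t.eq_empty_or_nonempty with rfl | ht
  · simp
  refine ⟨subset_convexHull 𝕜 _ (Set.mem_insert x t), ?_⟩
  rw [convexHull_insert ht]
  intro y₁ hy₁ y₂ hy₂ hxy
  simp only [mem_convexJoin, Set.mem_singleton_iff, exists_eq_left] at hy₁ hy₂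
  obtain ⟨z₁, hz₁, a₁, b₁, ha₁, hb₁, hab₁, rfl⟩ := hy₁
  obtain ⟨z₂, hz₂, a₂, b₂, ha₂, hb₂, hab₂, rfl⟩ := hy₂
  obtain ⟨θ₁, θ₂, hθ₁, hθ₂, hθ, hxy⟩ := hxy
  -- `β` is the total weight that `y₁, y₂` put on `convexHull t`; if it is positive, `x` lies there.
  set β := θ₁ * b₁ + θ₂ * b₂
  have hβx : β • x = (θ₁ * b₁) • z₁ + (θ₂ * b₂) • z₂ := by
    linear_combination (norm := module) -hxy + (θ₁ * hab₁ + θ₂ * hab₂ + hθ) • x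
  rcases (add_nonneg (mul_nonneg hθ₁.le hb₁) (mul_nonneg hθ₂.le hb₂)).eq_or_lt with hβ | hβ
  · have hb₁0 : b₁ = 0 := by nlinarith [mul_nonneg hθ₁.le hb₁, mul_nonneg hθ₂.le hb₂]
    have hb₂0 : b₂ = 0 := by nlinarith [mul_nonneg hθ₁.le hb₁, mul_nonneg hθ₂.le hb₂]
    obtain rfl : a₁ = 1 := by linarith
    obtain rfl : a₂ = 1 := by linarith
    simp [hb₁0]
  · refine absurd ?_ hx
    have hx_eq : x = (θ₁ * b₁ / β) • z₁ + (θ₂ * b₂ / β) • z₂ := by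
      calc x = β⁻¹ • (β • x) := by rw [inv_smul_smul₀ hβ.ne']
        _ = _ := by rw [hβx, smul_add, smul_smul, smul_smul, inv_mul_eq_div, inv_mul_eq_div]
    rw [hx_eq]
    exact (convex_convexHull 𝕜 t) hz₁ hz₂ (by positivity) (by positivity)
      (by rw [← add_div, div_self hβ.ne'])

theorem extremePoints_convexHull_of_not_collinear {p q r : E}
    (h : ¬Collinear 𝕜 ({p, q, r} : Set E)) :
    (convexHull 𝕜 {p, q, r}).extremePoints 𝕜 = {p, q, r} := by
  refine extremePoints_convexHull_subset.antisymm ?_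
  have hq : ¬Collinear 𝕜 ({q, p, r} : Set E) := by rwa [Set.insert_comm]
  have hr : ¬Collinear 𝕜 ({r, q, p} : Set E) := by
    rwa [Set.insert_comm r q, Set.pair_comm r p, Set.insert_comm q p]
  rintro x (rfl | rfl | rfl)
  · exact mem_extremePoints_convexHull_insert (notMem_convexHull_pair_of_not_collinear h)
  · rw [Set.insert_comm]
    exact mem_extremePoints_convexHull_insert (notMem_convexHull_pair_of_not_collinear hq)
  · rw [Set.insert_comm p q, Set.pair_comm p x, Set.insert_comm q x]
    exact mem_extremePoints_convexHull_insert (notMem_convexHull_pair_of_not_collinear hr)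

theorem AffineEquiv.image_eq_of_image_convexHull_eq (e : E ≃ᵃ[𝕜] F) {p q r : E} {p' q' r' : F}
    (h : ¬Collinear 𝕜 ({p, q, r} : Set E)) (h' : ¬Collinear 𝕜 ({p', q', r'} : Set F))
    (he : e '' convexHull 𝕜 {p, q, r} = convexHull 𝕜 {p', q', r'}) :
    e '' {p, q, r} = {p', q', r'} := by
  rw [← extremePoints_convexHull_of_not_collinear h, e.image_extremePoints, he,
    extremePoints_convexHull_of_not_collinear h']

end ExtremePoints

def pairwiseDistSqSum {α : Type*} [PseudoMetricSpace α] (s : Finset α) : ℝ :=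
  ∑ x ∈ s, ∑ y ∈ s, dist x y ^ 2

theorem Isometry.pairwiseDistSqSum_image {α β : Type*} [MetricSpace α] [PseudoMetricSpace β]
    [DecidableEq β] {f : α → β} (hf : Isometry f) (s : Finset α) :
    pairwiseDistSqSum (s.image f) = pairwiseDistSqSum s := by
  simp only [pairwiseDistSqSum, Finset.sum_image hf.injective.injOn, hf.dist_eq]

theorem shear_apply_zero (δ : ℝ) (p : Plane) : shear δ p 0 = p 0 + δ * p 1 := rfl

theorem shear_apply_one (δ : ℝ) (p : Plane) : shear δ p 1 = p 1 := rfl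

def shearEquiv (δ : ℝ) : Plane ≃ₗ[ℝ] Plane where
  toFun := shear δ
  invFun := shear (-δ)
  left_inv p := by ext i; fin_cases i <;> simp [shear_apply_zero, shear_apply_one]
  right_inv p := by ext i; fin_cases i <;> simp [shear_apply_zero, shear_apply_one]
  map_add' x y := by ext i; fin_cases i <;> simp [shear_apply_zero, shear_apply_one]; ring
  map_smul' c x := by ext i; fin_cases i <;> simp [shear_apply_zero, shear_apply_one]; ring

theorem shear_injective (δ : ℝ) : Function.Injective (shear δ) := (shearEquiv δ).injective

theorem dist_shear_sq (δ : ℝ) (x y : Plane) :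
    dist (shear δ x) (shear δ y) ^ 2 =
      (x 1 - y 1) ^ 2 * δ ^ 2 + 2 * (x 0 - y 0) * (x 1 - y 1) * δ + dist x y ^ 2 := by
  rw [EuclideanSpace.dist_eq, EuclideanSpace.dist_eq, Real.sq_sqrt (by positivity),
    Real.sq_sqrt (by positivity)]
  simp only [Fin.sum_univ_two, Real.dist_eq, sq_abs, shear_apply_zero, shear_apply_one]
  ring

theorem pairwiseDistSqSum_image_shear [DecidableEq Plane] (δ : ℝ) (s : Finset Plane) :
    pairwiseDistSqSum (s.image (shear δ)) =
      (∑ x ∈ s, ∑ y ∈ s, (x 1 - y 1) ^ 2) * δ ^ 2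
        + (∑ x ∈ s, ∑ y ∈ s, 2 * (x 0 - y 0) * (x 1 - y 1)) * δ + pairwiseDistSqSum s := by
  simp only [pairwiseDistSqSum, Finset.sum_image (shear_injective δ).injOn, dist_shear_sq,
    Finset.sum_add_distrib, Finset.sum_mul]

theorem collinear_of_forall_apply_one_eq {s : Set Plane} (c : ℝ) (hs : ∀ x ∈ s, x 1 = c) :
    Collinear ℝ s := by
  rw [collinear_iff_exists_forall_eq_smul_vadd]
  refine ⟨!₂[0, c], !₂[1, 0], fun x hx => ⟨x 0, ?_⟩⟩
  ext i
  fin_cases i <;> simp [hs x hx]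

theorem sum_sum_sq_sub_apply_one_ne_zero {s : Finset Plane} (hs : ¬Collinear ℝ (s : Set Plane)) :
    ∑ x ∈ s, ∑ y ∈ s, (x 1 - y 1) ^ 2 ≠ 0 := by
  intro h
  obtain ⟨x₀, hx₀⟩ : s.Nonempty := Finset.nonempty_iff_ne_empty.2 fun hempty =>
    hs (by rw [hempty, Finset.coe_empty]; exact collinear_empty ℝ Plane)
  simp only [Finset.sum_eq_zero_iff_of_nonneg (fun _ _ => Finset.sum_nonneg fun _ _ => sq_nonneg _),
    Finset.sum_eq_zero_iff_of_nonneg (fun _ _ => sq_nonneg _), sq_eq_zero_iff, sub_eq_zero] at h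
  exact hs (collinear_of_forall_apply_one_eq (x₀ 1) fun x hx => h x hx x₀ hx₀)

theorem pairwiseDistSqSum_image_shear_of_planeCongruent [DecidableEq Plane] {δ : ℝ}
    {p q r p' q' r' : Plane} (h : ¬Collinear ℝ ({p, q, r} : Set Plane))
    (h' : ¬Collinear ℝ ({p', q', r'} : Set Plane))
    (hδ : PlaneCongruent (shear δ '' convexHull ℝ {p, q, r}) (convexHull ℝ {p', q', r'})) :
    pairwiseDistSqSum (({p, q, r} : Finset Plane).image (shear δ)) =
      pairwiseDistSqSum {p', q', r'} := by
  obtain ⟨f, hf⟩ := hδ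
  let e : Plane ≃ᵃ[ℝ] Plane :=
    (shearEquiv δ).toAffineEquiv.trans f.toRealAffineIsometryEquiv.toAffineEquiv
  have he : ⇑e = f ∘ shear δ := rfl
  have hvertices : e '' {p, q, r} = {p', q', r'} :=
    e.image_eq_of_image_convexHull_eq h h' (by rw [he, Set.image_comp, hf])
  have himage : (({p, q, r} : Finset Plane).image (shear δ)).image f = {p', q', r'} := by
    apply Finset.coe_injective
    simpa [Set.image_insert_eq, he] using hvertices
  rw [← himage, f.isometry.pairwiseDistSqSum_image]

/-- For triangles `T`, `T'`, the set of `δ` with `M_δ(T) ≅ T'` is finite,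
of cardinality at most six. -/
theorem statement17 (T T' : Set Plane) (hT : IsTriangle T) (hT' : IsTriangle T') :
    {δ : ℝ | PlaneCongruent (shear δ '' T) T'}.Finite ∧
    {δ : ℝ | PlaneCongruent (shear δ '' T) T'}.encard ≤ 6 := by
  classical
  obtain ⟨p, q, r, hind, rfl⟩ := hT
  obtain ⟨p', q', r', hind', rfl⟩ := hT'
  rw [affineIndependent_iff_not_collinear_set] at hind hind'
  set S : Finset Plane := {p, q, r}
  have hS : ¬Collinear ℝ (S : Set Plane) := by simpa [S] using hind
  have hsub : {δ | PlaneCongruent (shear δ '' convexHull ℝ {p, q, r}) (convexHull ℝ {p', q', r'})}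
      ⊆ {δ | (∑ x ∈ S, ∑ y ∈ S, (x 1 - y 1) ^ 2) * δ ^ 2
          + (∑ x ∈ S, ∑ y ∈ S, 2 * (x 0 - y 0) * (x 1 - y 1)) * δ
          + (pairwiseDistSqSum S - pairwiseDistSqSum {p', q', r'}) = 0} := by
    intro δ hδ
    have hsum := pairwiseDistSqSum_image_shear_of_planeCongruent hind hind' hδ
    rw [pairwiseDistSqSum_image_shear] at hsum
    rw [Set.mem_ofPred_eq]
    linarith
  have hcard := (Set.encard_mono hsub).trans
    (encard_setOf_quadratic_eq_zero_le_two (sum_sum_sq_sub_apply_one_ne_zero hS))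
  exact ⟨Set.finite_of_encard_le_coe hcard, hcard.trans (by norm_num)⟩
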